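/- Let M be a smooth manifold, n ≥ 1, and let {·,·} be an affine Jacobi bracket on the trivial bundle M×ℝⁿ. Then: (a) the space of affine functions is closed under {·,·} and is a Lie algebra; (b) for every affine function a and every f ∈ C^∞(M,ℝ) there is a unique ρ⁺(a)(f) ∈ C^∞(M,ℝ) with ρ⁺(a)(f)∘π = {a, f∘π} − (f∘π)·{a,1}, and the map f ↦ ρ⁺(a)(f) is an ℝ-linear derivation of the ring C^∞(M,ℝ); (c) ρ⁺ is C^∞(M,ℝ)-linear in a, i.e. ρ⁺((f∘π)·a + b) = f·ρ⁺(a) + ρ⁺(b) for all affine a,b and f ∈ C^∞(M,ℝ); (d) the Leibniz rule {a, (f∘π)·b} = (f∘π)·{a,b} + (ρ⁺(a)(f)∘π)·b holds for all affine a,b and f ∈ C^∞(M,ℝ). (This is the Lie algebroid structure on the bundle A⁺ of fibrewise affine functionals induced by an affine Jacobi structure.) -/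

import Mathlib

open scoped Manifold

/-- A Jacobi bracket on the smooth functions (those satisfying the predicate `S`)
of a space `N`: an ℝ-bilinear antisymmetric bracket satisfying the Jacobi identity
and the generalized Leibniz rule. -/
structure JacobiBracket (N : Type*) (S : (N → ℝ) → Prop) where
  br : (N → ℝ) → (N → ℝ) → N → ℝ
  smooth_br : ∀ f g, S f → S g → S (br f g)
  add_left : ∀ f g h, S f → S g → S h → br (f + g) h = br f h + br g h
  smul_left : ∀ (c : ℝ) (f g : N → ℝ), S f → S g → br (c • f) g = c • br f g
  antisymm : ∀ f g, S f → S g → br f g = -br g f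
  jacobi : ∀ f g h, S f → S g → S h →
    br f (br g h) + br g (br h f) + br h (br f g) = 0
  leibniz : ∀ f g h, S f → S g → S h →
    br f (g * h) = br f g * h + g * br f h - g * h * br f 1

/-- A function on the trivial bundle `M × ℝⁿ` is fibrewise affine if on each fibre
it is an affine map `ℝⁿ → ℝ`. -/
def IsFibAffine {M : Type*} {n : ℕ} (F : M × (Fin n → ℝ) → ℝ) : Prop :=
  ∀ x : M, ∃ (μ : (Fin n → ℝ) →ₗ[ℝ] ℝ) (c : ℝ), ∀ v, F (x, v) = μ v + c

section

variable {EM : Type*} [NormedAddCommGroup EM] [NormedSpace ℝ EM] [FiniteDimensional ℝ EM]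
  {HM : Type*} [TopologicalSpace HM] (IM : ModelWithCorners ℝ EM HM)
  (M : Type*) [TopologicalSpace M] [ChartedSpace HM M] [IsManifold IM (⊤ : ℕ∞) M]
  (n : ℕ)

/-- Smooth real functions on the total space of the trivial bundle `M × ℝⁿ`. -/
def SmoothBdl : (M × (Fin n → ℝ) → ℝ) → Prop :=
  fun F => ContMDiff (IM.prod (𝓘(ℝ, Fin n → ℝ))) 𝓘(ℝ, ℝ) (⊤ : ℕ∞) F

/-- Basic functions on the trivial bundle `M × ℝⁿ`: pullbacks of smooth functions
on `M` by the projection. -/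
def IsBasic : (M × (Fin n → ℝ) → ℝ) → Prop :=
  fun F => ∃ f : M → ℝ, ContMDiff IM 𝓘(ℝ, ℝ) (⊤ : ℕ∞) f ∧ F = fun p => f p.1

end

/-!
The derivation part `{a, h} - h·{a, 1}` of the bracket is a derivation in `h`. For `a` affine and
`f` basic it is fibrewise affine, and by the Leibniz rule its product with a fibre coordinate `vᵢ`
is `{a, f·vᵢ} - f·{a, vᵢ}`, again fibrewise affine. An affine function whose product with a
nonzero linear form is affine is constant, so `{a, f∘π} - (f∘π)·{a, 1}` is basic: this is
`ρ⁺(a)(f)`. The Leibniz rule in the first argument gives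
`ρ⁺(f·vᵢ) = f·ρ⁺(vᵢ) + vᵢ·(ρ⁺(f) - f·ρ⁺(1))`; as all these anchors are basic, the last factor
vanishes, and then the same rule gives `C^∞(M)`-linearity of `ρ⁺`.
-/

theorem LinearMap.eq_zero_of_forall_mul_eq_zero {K V : Type*} [Field K] [AddCommGroup V]
    [Module K V] {ℓ μ : V →ₗ[K] K} (hℓ : ℓ ≠ 0) (h : ∀ v, ℓ v * μ v = 0) : μ = 0 := by
  obtain ⟨e, he⟩ : ∃ e, ℓ e ≠ 0 := by
    by_contra! h'
    exact hℓ (LinearMap.ext h')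
  have hμ : ∀ v, ℓ v ≠ 0 → μ v = 0 := fun v hv => (mul_eq_zero.1 (h v)).resolve_left hv
  ext w
  by_cases hw : ℓ w = 0
  · have hwe := hμ (w + e) (by simpa [hw] using he)
    rwa [map_add, hμ e he, add_zero] at hwe
  · exact hμ w hw

theorem LinearMap.mul_eq_zero_of_mul_eq_affine {V : Type*} [AddCommGroup V] [Module ℝ V]
    {ℓ μ ν : V →ₗ[ℝ] ℝ} {c : ℝ} (h : ∀ v, ℓ v * μ v = ν v + c) (v : V) : ℓ v * μ v = 0 := by
  have h0 := h 0
  have hneg := h (-v)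
  simp only [map_zero, mul_zero, map_neg, neg_mul_neg] at h0 hneg
  linarith [h v]

theorem apply_eq_apply_zero_of_affine_of_mul_affine {V : Type*} [AddCommGroup V] [Module ℝ V]
    {ℓ : V →ₗ[ℝ] ℝ} (hℓ : ℓ ≠ 0) {φ : V → ℝ}
    (hφ : ∃ (μ : V →ₗ[ℝ] ℝ) (c : ℝ), ∀ v, φ v = μ v + c)
    (hφℓ : ∃ (ν : V →ₗ[ℝ] ℝ) (d : ℝ), ∀ v, φ v * ℓ v = ν v + d) (v : V) : φ v = φ 0 := by
  obtain ⟨μ, c, hμ⟩ := hφ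
  obtain ⟨ν, d, hν⟩ := hφℓ
  have hquad : ∀ w, ℓ w * μ w = (ν - c • ℓ) w + d := fun w => by
    have := hν w
    rw [hμ w] at this
    simp only [LinearMap.sub_apply, LinearMap.smul_apply, smul_eq_mul]
    linear_combination this
  have hμ0 : μ = 0 := LinearMap.eq_zero_of_forall_mul_eq_zero hℓ
    (LinearMap.mul_eq_zero_of_mul_eq_affine hquad)
  simp [hμ, hμ0]

namespace JacobiBracket

variable {N : Type*} {S : (N → ℝ) → Prop} (J : JacobiBracket N S)

def anchor (a h : N → ℝ) : N → ℝ := J.br a h - h * J.br a 1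

theorem br_one_one (h1 : S 1) : J.br 1 1 = 0 := by
  have h := J.antisymm 1 1 h1 h1
  rw [eq_neg_iff_add_eq_zero, ← two_smul ℝ] at h
  exact (smul_eq_zero.1 h).resolve_left two_ne_zero

theorem br_add_right {a g h : N → ℝ} (ha : S a) (hg : S g) (hh : S h) (hgh : S (g + h)) :
    J.br a (g + h) = J.br a g + J.br a h := by
  rw [J.antisymm a (g + h) ha hgh, J.add_left g h a hg hh ha,
    J.antisymm g a hg ha, J.antisymm h a hh ha, neg_add, neg_neg, neg_neg]

theorem br_smul_right (c : ℝ) {a g : N → ℝ} (ha : S a) (hg : S g) (hcg : S (c • g)) :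
    J.br a (c • g) = c • J.br a g := by
  rw [J.antisymm a (c • g) ha hcg, J.smul_left c g a hg ha, J.antisymm g a hg ha, smul_neg,
    neg_neg]

theorem br_mul_right {a g h : N → ℝ} (ha : S a) (hg : S g) (hh : S h) :
    J.br a (g * h) = g * J.br a h + J.anchor a g * h := by
  rw [J.leibniz a g h ha hg hh, anchor]
  ring

theorem br_mul_left {u w h : N → ℝ} (hu : S u) (hw : S w) (hh : S h) (huw : S (u * w)) :
    J.br (u * w) h = w * J.br u h + u * J.br w h + u * w * J.br h 1 := by
  rw [J.antisymm (u * w) h huw hh, J.leibniz h u w hh hu hw,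
    J.antisymm h u hh hu, J.antisymm h w hh hw]
  ring

theorem anchor_add_left {a b h : N → ℝ} (ha : S a) (hb : S b) (hh : S h) (h1 : S 1) :
    J.anchor (a + b) h = J.anchor a h + J.anchor b h := by
  simp only [anchor, J.add_left a b h ha hb hh, J.add_left a b 1 ha hb h1]
  ring

theorem anchor_mul_left {u w h : N → ℝ} (hu : S u) (hw : S w) (hh : S h) (h1 : S 1)
    (huw : S (u * w)) :
    J.anchor (u * w) h = w * J.anchor u h + u * J.anchor w h - u * w * J.anchor 1 h := by
  simp only [anchor, J.br_mul_left hu hw hh huw, J.br_mul_left hu hw h1 huw, J.br_one_one h1,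
    J.antisymm h 1 hh h1]
  ring

theorem anchor_add_right {a g h : N → ℝ} (ha : S a) (hg : S g) (hh : S h) (hgh : S (g + h)) :
    J.anchor a (g + h) = J.anchor a g + J.anchor a h := by
  simp only [anchor, J.br_add_right ha hg hh hgh]
  ring

theorem anchor_smul_right (c : ℝ) {a g : N → ℝ} (ha : S a) (hg : S g) (hcg : S (c • g)) :
    J.anchor a (c • g) = c • J.anchor a g := by
  simp only [anchor, J.br_smul_right c ha hg hcg, smul_sub, smul_mul_assoc]

theorem anchor_mul_right {a g h : N → ℝ} (ha : S a) (hg : S g) (hh : S h) :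
    J.anchor a (g * h) = J.anchor a g * h + g * J.anchor a h := by
  simp only [anchor, J.leibniz a g h ha hg hh]
  ring

end JacobiBracket

section TrivialBundle

variable {EM : Type*} [NormedAddCommGroup EM] [NormedSpace ℝ EM]
  {HM : Type*} [TopologicalSpace HM] {IM : ModelWithCorners ℝ EM HM}
  {M : Type*} [TopologicalSpace M] [ChartedSpace HM M]
  {n : ℕ}

theorem SmoothBdl.basic {f : M → ℝ} (hf : ContMDiff IM 𝓘(ℝ, ℝ) (⊤ : ℕ∞) f) :
    SmoothBdl IM M n (fun p => f p.1) :=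
  hf.comp contMDiff_fst

theorem SmoothBdl.one : SmoothBdl IM M n 1 :=
  contMDiff_const

theorem SmoothBdl.coord (i : Fin n) : SmoothBdl IM M n (fun p => p.2 i) :=
  (contMDiff_iff_contDiff.mpr (contDiff_apply ℝ ℝ i)).comp contMDiff_snd

theorem SmoothBdl.add {F G : M × (Fin n → ℝ) → ℝ} (hF : SmoothBdl IM M n F)
    (hG : SmoothBdl IM M n G) : SmoothBdl IM M n (F + G) :=
  ContMDiff.add hF hG

theorem SmoothBdl.mul {F G : M × (Fin n → ℝ) → ℝ} (hF : SmoothBdl IM M n F)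
    (hG : SmoothBdl IM M n G) : SmoothBdl IM M n (F * G) :=
  ContMDiff.mul hF hG

theorem SmoothBdl.const_smul (c : ℝ) {F : M × (Fin n → ℝ) → ℝ} (hF : SmoothBdl IM M n F) :
    SmoothBdl IM M n (c • F) :=
  (contMDiff_const (I' := 𝓘(ℝ, ℝ))).smul hF

end TrivialBundle

section Affine

variable {M : Type*} {n : ℕ}

theorem IsFibAffine.basic (f : M → ℝ) : IsFibAffine (fun p : M × (Fin n → ℝ) => f p.1) :=
  fun x => ⟨0, f x, by simp⟩

theorem IsFibAffine.one : IsFibAffine (1 : M × (Fin n → ℝ) → ℝ) :=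
  fun _ => ⟨0, 1, by simp⟩

theorem IsFibAffine.coord (i : Fin n) : IsFibAffine (fun p : M × (Fin n → ℝ) => p.2 i) :=
  fun _ => ⟨LinearMap.proj i, 0, by simp⟩

theorem IsFibAffine.sub {F G : M × (Fin n → ℝ) → ℝ} (hF : IsFibAffine F) (hG : IsFibAffine G) :
    IsFibAffine (F - G) := fun x => by
  obtain ⟨μ, c, hμ⟩ := hF x
  obtain ⟨ν, d, hν⟩ := hG x
  exact ⟨μ - ν, c - d, fun v => by simp [hμ, hν]; ring⟩

theorem IsFibAffine.basic_mul (f : M → ℝ) {F : M × (Fin n → ℝ) → ℝ} (hF : IsFibAffine F) :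
    IsFibAffine ((fun p => f p.1) * F) := fun x => by
  obtain ⟨μ, c, hμ⟩ := hF x
  exact ⟨f x • μ, f x * c, fun v => by simp [hμ]; ring⟩

theorem IsFibAffine.apply_eq_apply_zero {F : M × (Fin n → ℝ) → ℝ} (hF : IsFibAffine F)
    {i : Fin n} (hFi : IsFibAffine (F * fun p => p.2 i)) (x : M) (v : Fin n → ℝ) :
    F (x, v) = F (x, 0) := by
  have hproj : (LinearMap.proj i : (Fin n → ℝ) →ₗ[ℝ] ℝ) ≠ 0 := fun h => by
    simpa using LinearMap.congr_fun h (Pi.single i 1)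
  exact apply_eq_apply_zero_of_affine_of_mul_affine (φ := fun v => F (x, v)) hproj (hF x)
    (hFi x) v

end Affine

def JacobiBracket.IsAffine {M : Type*} {n : ℕ} {S : (M × (Fin n → ℝ) → ℝ) → Prop}
    (J : JacobiBracket (M × (Fin n → ℝ)) S) : Prop :=
  ∀ a b, S a → S b → IsFibAffine a → IsFibAffine b → IsFibAffine (J.br a b)

/-- `ρ⁺(a)(f)`, read off on the zero section: the expression is constant along the fibres
(`JacobiBracket.anchor_basic_apply_eq`). -/
def JacobiBracket.affineAnchor {M : Type*} {n : ℕ} {S : (M × (Fin n → ℝ) → ℝ) → Prop}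
    (J : JacobiBracket (M × (Fin n → ℝ)) S) (a : M × (Fin n → ℝ) → ℝ) (f : M → ℝ) : M → ℝ :=
  fun x => J.anchor a (fun q => f q.1) (x, 0)

namespace JacobiBracket

variable {EM : Type*} [NormedAddCommGroup EM] [NormedSpace ℝ EM]
  {HM : Type*} [TopologicalSpace HM] {IM : ModelWithCorners ℝ EM HM}
  {M : Type*} [TopologicalSpace M] [ChartedSpace HM M]
  {n : ℕ} (J : JacobiBracket (M × (Fin n → ℝ)) (SmoothBdl IM M n))
  {a : M × (Fin n → ℝ) → ℝ} {f g : M → ℝ}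

theorem smoothBdl_anchor {h : M × (Fin n → ℝ) → ℝ} (ha : SmoothBdl IM M n a)
    (hh : SmoothBdl IM M n h) : SmoothBdl IM M n (J.anchor a h) :=
  (J.smooth_br a h ha hh).sub (hh.mul (J.smooth_br a 1 ha .one))

theorem anchor_basic_apply_eq (hn : 1 ≤ n) (hJ : J.IsAffine) (ha : SmoothBdl IM M n a)
    (haa : IsFibAffine a) (hf : ContMDiff IM 𝓘(ℝ, ℝ) (⊤ : ℕ∞) f) (x : M) (v : Fin n → ℝ) :
    J.anchor a (fun q => f q.1) (x, v) = J.anchor a (fun q => f q.1) (x, 0) := by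
  let i : Fin n := ⟨0, hn⟩
  have hcoord : J.anchor a (fun q => f q.1) * (fun p => p.2 i)
      = J.br a ((fun q => f q.1) * fun p => p.2 i)
        - (fun q => f q.1) * J.br a (fun p => p.2 i) := by
    rw [J.br_mul_right ha (.basic hf) (.coord i)]
    ring
  refine IsFibAffine.apply_eq_apply_zero ?_ (i := i) ?_ x v
  · exact (hJ _ _ ha (.basic hf) haa (.basic f)).sub
      (.basic_mul f (hJ _ _ ha .one haa .one))
  · rw [hcoord]
    exact (hJ _ _ ha ((SmoothBdl.basic hf).mul (.coord i)) haa (.basic_mul f (.coord i))).sub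
      (.basic_mul f (hJ _ _ ha (.coord i) haa (.coord i)))

theorem anchor_basic_basic (hn : 1 ≤ n) (hJ : J.IsAffine)
    (hf : ContMDiff IM 𝓘(ℝ, ℝ) (⊤ : ℕ∞) f) (hg : ContMDiff IM 𝓘(ℝ, ℝ) (⊤ : ℕ∞) g) :
    J.anchor (fun q => f q.1) (fun q => g q.1)
      = (fun q => f q.1) * J.anchor 1 (fun q => g q.1) := by
  let i : Fin n := ⟨0, hn⟩
  set E := J.anchor (fun q => f q.1) (fun q => g q.1)
    - (fun q => f q.1) * J.anchor 1 (fun q => g q.1) with hE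
  have hE_const : ∀ x v, E (x, v) = E (x, 0) := fun x v => by
    simp only [hE, Pi.sub_apply, Pi.mul_apply,
      J.anchor_basic_apply_eq hn hJ (.basic hf) (.basic f) hg x v,
      J.anchor_basic_apply_eq hn hJ .one .one hg x v]
  have hsplit : J.anchor ((fun q => f q.1) * fun p => p.2 i) (fun q => g q.1)
      = (fun q => f q.1) * J.anchor (fun p => p.2 i) (fun q => g q.1) + (fun p => p.2 i) * E := by
    rw [J.anchor_mul_left (.basic hf) (.coord i) (.basic hg) .one
      ((SmoothBdl.basic hf).mul (.coord i)), hE]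
    ring
  have hE_zero : ∀ x, E (x, 0) = 0 := fun x => by
    have h1 := congrFun hsplit (x, Pi.single i 1)
    have h0 := congrFun hsplit (x, 0)
    simp only [Pi.add_apply, Pi.mul_apply, Pi.single_eq_same, Pi.zero_apply, one_mul,
      zero_mul] at h0 h1
    rw [J.anchor_basic_apply_eq hn hJ ((SmoothBdl.basic hf).mul (.coord i))
      (.basic_mul f (.coord i)) hg, J.anchor_basic_apply_eq hn hJ (.coord i) (.coord i) hg,
      hE_const] at h1
    linarith
  rw [← sub_eq_zero, ← hE]
  funext ⟨x, v⟩
  rw [hE_const, hE_zero, Pi.zero_apply]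

theorem anchor_basic_mul (hn : 1 ≤ n) (hJ : J.IsAffine) (ha : SmoothBdl IM M n a)
    (hf : ContMDiff IM 𝓘(ℝ, ℝ) (⊤ : ℕ∞) f) (hg : ContMDiff IM 𝓘(ℝ, ℝ) (⊤ : ℕ∞) g) :
    J.anchor ((fun q => f q.1) * a) (fun q => g q.1)
      = (fun q => f q.1) * J.anchor a (fun q => g q.1) := by
  rw [J.anchor_mul_left (.basic hf) ha (.basic hg) .one ((SmoothBdl.basic hf).mul ha),
    J.anchor_basic_basic hn hJ hf hg]
  ring

theorem affineAnchor_comp_fst (hn : 1 ≤ n) (hJ : J.IsAffine) (ha : SmoothBdl IM M n a)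
    (haa : IsFibAffine a) (hf : ContMDiff IM 𝓘(ℝ, ℝ) (⊤ : ℕ∞) f) :
    (fun p : M × (Fin n → ℝ) => J.affineAnchor a f p.1) = J.anchor a (fun q => f q.1) :=
  funext fun p => (J.anchor_basic_apply_eq hn hJ ha haa hf p.1 p.2).symm

theorem contMDiff_affineAnchor (ha : SmoothBdl IM M n a) (hf : ContMDiff IM 𝓘(ℝ, ℝ) (⊤ : ℕ∞) f) :
    ContMDiff IM 𝓘(ℝ, ℝ) (⊤ : ℕ∞) (J.affineAnchor a f) :=
  (J.smoothBdl_anchor ha (.basic hf)).comp (contMDiff_id.prodMk contMDiff_const)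

theorem affineAnchor_add (ha : SmoothBdl IM M n a) (hf : ContMDiff IM 𝓘(ℝ, ℝ) (⊤ : ℕ∞) f)
    (hg : ContMDiff IM 𝓘(ℝ, ℝ) (⊤ : ℕ∞) g) :
    J.affineAnchor a (f + g) = J.affineAnchor a f + J.affineAnchor a g :=
  funext fun x => congrFun (J.anchor_add_right ha (.basic hf) (.basic hg)
    ((SmoothBdl.basic hf).add (.basic hg))) (x, 0)

theorem affineAnchor_mul (ha : SmoothBdl IM M n a) (hf : ContMDiff IM 𝓘(ℝ, ℝ) (⊤ : ℕ∞) f)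
    (hg : ContMDiff IM 𝓘(ℝ, ℝ) (⊤ : ℕ∞) g) :
    J.affineAnchor a (f * g) = J.affineAnchor a f * g + f * J.affineAnchor a g :=
  funext fun x => congrFun (J.anchor_mul_right ha (.basic hf) (.basic hg)) (x, 0)

theorem affineAnchor_const_smul (c : ℝ) (ha : SmoothBdl IM M n a)
    (hf : ContMDiff IM 𝓘(ℝ, ℝ) (⊤ : ℕ∞) f) :
    J.affineAnchor a (c • f) = c • J.affineAnchor a f :=
  funext fun x => congrFun (J.anchor_smul_right c ha (.basic hf)
    ((SmoothBdl.basic hf).const_smul c)) (x, 0)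

theorem affineAnchor_basic_mul_add (hn : 1 ≤ n) (hJ : J.IsAffine) {b : M × (Fin n → ℝ) → ℝ}
    (ha : SmoothBdl IM M n a) (hb : SmoothBdl IM M n b) (hf : ContMDiff IM 𝓘(ℝ, ℝ) (⊤ : ℕ∞) f)
    (hg : ContMDiff IM 𝓘(ℝ, ℝ) (⊤ : ℕ∞) g) :
    J.affineAnchor ((fun p => f p.1) * a + b) g = f * J.affineAnchor a g + J.affineAnchor b g := by
  funext x
  have h := J.anchor_add_left ((SmoothBdl.basic hf).mul ha) hb (.basic hg) .one
  rw [J.anchor_basic_mul hn hJ ha hf hg] at h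
  exact congrFun h (x, 0)

end JacobiBracket

theorem stmt2_general
    {EM : Type*} [NormedAddCommGroup EM] [NormedSpace ℝ EM]
    {HM : Type*} [TopologicalSpace HM] (IM : ModelWithCorners ℝ EM HM)
    (M : Type*) [TopologicalSpace M] [ChartedSpace HM M]
    (n : ℕ) (hn : 1 ≤ n)
    (J : JacobiBracket (M × (Fin n → ℝ)) (SmoothBdl IM M n))
    (haff : ∀ a b, SmoothBdl IM M n a → SmoothBdl IM M n b →
      IsFibAffine a → IsFibAffine b → IsFibAffine (J.br a b)) :
    -- (a) closedness of affine functions under the bracket (together with the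
    -- antisymmetry and Jacobi identity of `J`, a Lie algebra structure)
    (∀ a b, SmoothBdl IM M n a → SmoothBdl IM M n b → IsFibAffine a → IsFibAffine b →
      SmoothBdl IM M n (J.br a b) ∧ IsFibAffine (J.br a b)) ∧
    -- the anchor map ρ⁺
    (∃ ρ : (M × (Fin n → ℝ) → ℝ) → (M → ℝ) → (M → ℝ),
      -- (b) defining property: ρ⁺(a)(f)∘π = {a, f∘π} − (f∘π)·{a,1}, with ρ⁺(a)(f) smooth
      (∀ a f, SmoothBdl IM M n a → IsFibAffine a → ContMDiff IM 𝓘(ℝ, ℝ) (⊤ : ℕ∞) f →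
        ContMDiff IM 𝓘(ℝ, ℝ) (⊤ : ℕ∞) (ρ a f) ∧
        (fun p : M × (Fin n → ℝ) => ρ a f p.1)
          = fun p => J.br a (fun q => f q.1) p - f p.1 * J.br a 1 p) ∧
      -- (b) uniqueness of ρ⁺(a)(f)
      (∀ a f g, SmoothBdl IM M n a → IsFibAffine a → ContMDiff IM 𝓘(ℝ, ℝ) (⊤ : ℕ∞) f →
        ((fun p : M × (Fin n → ℝ) => g p.1)
          = fun p => J.br a (fun q => f q.1) p - f p.1 * J.br a 1 p) →
        g = ρ a f) ∧
      -- (b) ρ⁺(a) is an ℝ-linear derivation of C^∞(M,ℝ)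
      (∀ a, SmoothBdl IM M n a → IsFibAffine a →
        (∀ f g, ContMDiff IM 𝓘(ℝ, ℝ) (⊤ : ℕ∞) f → ContMDiff IM 𝓘(ℝ, ℝ) (⊤ : ℕ∞) g →
          ρ a (f + g) = ρ a f + ρ a g ∧ ρ a (f * g) = ρ a f * g + f * ρ a g) ∧
        (∀ (c : ℝ) (f : M → ℝ), ContMDiff IM 𝓘(ℝ, ℝ) (⊤ : ℕ∞) f → ρ a (c • f) = c • ρ a f)) ∧
      -- (c) C^∞(M,ℝ)-linearity of ρ⁺ in a
      (∀ a b f g, SmoothBdl IM M n a → SmoothBdl IM M n b → IsFibAffine a → IsFibAffine b →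
        ContMDiff IM 𝓘(ℝ, ℝ) (⊤ : ℕ∞) f → ContMDiff IM 𝓘(ℝ, ℝ) (⊤ : ℕ∞) g →
        ρ ((fun p => f p.1) * a + b) g = f * ρ a g + ρ b g) ∧
      -- (d) Leibniz rule
      (∀ a b f, SmoothBdl IM M n a → SmoothBdl IM M n b → IsFibAffine a → IsFibAffine b →
        ContMDiff IM 𝓘(ℝ, ℝ) (⊤ : ℕ∞) f →
        J.br a ((fun p => f p.1) * b)
          = (fun p => f p.1) * J.br a b + (fun p => ρ a f p.1) * b)) := by
  refine ⟨fun a b ha hb haa hab => ⟨J.smooth_br a b ha hb, haff a b ha hb haa hab⟩,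
    J.affineAnchor, fun a f ha haa hf =>
      ⟨J.contMDiff_affineAnchor ha hf, J.affineAnchor_comp_fst hn haff ha haa hf⟩,
    fun a f g _ _ _ hg => funext fun x => congrFun hg (x, 0),
    fun a ha _ => ⟨fun f g hf hg => ⟨J.affineAnchor_add ha hf hg, J.affineAnchor_mul ha hf hg⟩,
      fun c f hf => J.affineAnchor_const_smul c ha hf⟩,
    fun a b f g ha hb _ _ hf hg => J.affineAnchor_basic_mul_add hn haff ha hb hf hg,
    fun a b f ha hb haa _ hf => ?_⟩
  rw [J.br_mul_right ha (.basic hf) hb, J.affineAnchor_comp_fst hn haff ha haa hf]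

/-- an affine Jacobi bracket on the trivial bundle `M × ℝⁿ`, `n ≥ 1`,
induces a Lie algebroid structure on the bundle of fibrewise affine functionals:
(a) the affine functions are closed under the bracket (hence form a Lie algebra);
(b) there is an anchor `ρ⁺` with `ρ⁺(a)(f)∘π = {a, f∘π} − (f∘π)·{a,1}`, uniquely
determined, each `ρ⁺(a)` being an ℝ-linear derivation of `C^∞(M,ℝ)`;
(c) `ρ⁺` is `C^∞(M,ℝ)`-linear in `a`; (d) the Leibniz rule holds. -/
theorem stmt2
    {EM : Type*} [NormedAddCommGroup EM] [NormedSpace ℝ EM] [FiniteDimensional ℝ EM]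
    {HM : Type*} [TopologicalSpace HM] (IM : ModelWithCorners ℝ EM HM)
    (M : Type*) [TopologicalSpace M] [ChartedSpace HM M] [IsManifold IM (⊤ : ℕ∞) M]
    (n : ℕ) (hn : 1 ≤ n)
    (J : JacobiBracket (M × (Fin n → ℝ)) (SmoothBdl IM M n))
    (haff : ∀ a b, SmoothBdl IM M n a → SmoothBdl IM M n b →
      IsFibAffine a → IsFibAffine b → IsFibAffine (J.br a b)) :
    -- (a) closedness of affine functions under the bracket (together with the
    -- antisymmetry and Jacobi identity of `J`, a Lie algebra structure)
    (∀ a b, SmoothBdl IM M n a → SmoothBdl IM M n b → IsFibAffine a → IsFibAffine b →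
      SmoothBdl IM M n (J.br a b) ∧ IsFibAffine (J.br a b)) ∧
    -- the anchor map ρ⁺
    (∃ ρ : (M × (Fin n → ℝ) → ℝ) → (M → ℝ) → (M → ℝ),
      -- (b) defining property: ρ⁺(a)(f)∘π = {a, f∘π} − (f∘π)·{a,1}, with ρ⁺(a)(f) smooth
      (∀ a f, SmoothBdl IM M n a → IsFibAffine a → ContMDiff IM 𝓘(ℝ, ℝ) (⊤ : ℕ∞) f →
        ContMDiff IM 𝓘(ℝ, ℝ) (⊤ : ℕ∞) (ρ a f) ∧
        (fun p : M × (Fin n → ℝ) => ρ a f p.1)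
          = fun p => J.br a (fun q => f q.1) p - f p.1 * J.br a 1 p) ∧
      -- (b) uniqueness of ρ⁺(a)(f)
      (∀ a f g, SmoothBdl IM M n a → IsFibAffine a → ContMDiff IM 𝓘(ℝ, ℝ) (⊤ : ℕ∞) f →
        ((fun p : M × (Fin n → ℝ) => g p.1)
          = fun p => J.br a (fun q => f q.1) p - f p.1 * J.br a 1 p) →
        g = ρ a f) ∧
      -- (b) ρ⁺(a) is an ℝ-linear derivation of C^∞(M,ℝ)
      (∀ a, SmoothBdl IM M n a → IsFibAffine a →
        (∀ f g, ContMDiff IM 𝓘(ℝ, ℝ) (⊤ : ℕ∞) f → ContMDiff IM 𝓘(ℝ, ℝ) (⊤ : ℕ∞) g →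
          ρ a (f + g) = ρ a f + ρ a g ∧ ρ a (f * g) = ρ a f * g + f * ρ a g) ∧
        (∀ (c : ℝ) (f : M → ℝ), ContMDiff IM 𝓘(ℝ, ℝ) (⊤ : ℕ∞) f → ρ a (c • f) = c • ρ a f)) ∧
      -- (c) C^∞(M,ℝ)-linearity of ρ⁺ in a
      (∀ a b f g, SmoothBdl IM M n a → SmoothBdl IM M n b → IsFibAffine a → IsFibAffine b →
        ContMDiff IM 𝓘(ℝ, ℝ) (⊤ : ℕ∞) f → ContMDiff IM 𝓘(ℝ, ℝ) (⊤ : ℕ∞) g →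
        ρ ((fun p => f p.1) * a + b) g = f * ρ a g + ρ b g) ∧
      -- (d) Leibniz rule
      (∀ a b f, SmoothBdl IM M n a → SmoothBdl IM M n b → IsFibAffine a → IsFibAffine b →
        ContMDiff IM 𝓘(ℝ, ℝ) (⊤ : ℕ∞) f →
        J.br a ((fun p => f p.1) * b)
          = (fun p => f p.1) * J.br a b + (fun p => ρ a f p.1) * b)) :=
  stmt2_general IM M n hn J haff
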